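/- arXiv:1403.2439 — 6 statements merged into one kernel-verified Lean document; each statement's English description precedes it below -/
import Mathlib

section
/- For any binary strings s and t, the interleaving s∘t of s with t is equicomposable with the interleaving s∘t* of s with the reversal t* of t. -/
open MvPolynomial

/-- Multiset of compositions of all nonempty contiguous substrings. -/
def subComps (s : List Bool) : Multiset (Multiset Bool) :=
  ↑(((List.range s.length).flatMap fun i =>
      (List.range (s.length - i)).map fun j =>
        (((s.drop i).take (j + 1) : List Bool) : Multiset Bool)))

def Equicomposable (s t : List Bool) : Prop := subComps s = subComps t

def interleave (s t : List Bool) : List Bool := s ++ t.flatMap (fun b => b :: s)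

noncomputable def gen (s : List Bool) : MvPolynomial (Fin 2) ℤ :=
  ∑ i ∈ Finset.range (s.length + 1),
    X 0 ^ ((s.take i).count false) * X 1 ^ (i - (s.take i).count false)

noncomputable def recip (P : MvPolynomial (Fin 2) ℤ) : MvPolynomial (Fin 2) ℤ :=
  ∑ m ∈ P.support,
    monomial (Finsupp.single 0 (P.degreeOf 0 - m 0) + Finsupp.single 1 (P.degreeOf 1 - m 1))
      (coeff m P)

abbrev F := FractionRing (MvPolynomial (Fin 2) ℤ)

noncomputable def toF (P : MvPolynomial (Fin 2) ℤ) : F :=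
  algebraMap (MvPolynomial (Fin 2) ℤ) F P

noncomputable def invEval (P : MvPolynomial (Fin 2) ℤ) : F :=
  MvPolynomial.aeval (fun i => (algebraMap (MvPolynomial (Fin 2) ℤ) F (X i))⁻¹) P

noncomputable def compPoly (s : List Bool) : MvPolynomial (Fin 2) ℤ :=
  (((List.range s.length).flatMap fun i =>
      (List.range (s.length - i)).map fun j =>
        X 0 ^ (((s.drop i).take (j + 1)).count false)
          * X 1 ^ (((s.drop i).take (j + 1)).count true) :
      List (MvPolynomial (Fin 2) ℤ))).sum

noncomputable def toUni (P : MvPolynomial (Fin 2) ℤ) : Polynomial ℤ :=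
  MvPolynomial.aeval (fun _ => Polynomial.X) P

def Csub (w : List Bool) (p q : ℕ) : Multiset Bool := ↑((w.take q).drop p)

lemma interleave_cons (s : List Bool) (b : Bool) (t : List Bool) :
    interleave s (b :: t) = s ++ b :: interleave s t := by
  simp [interleave]

lemma interleave_length (s t : List Bool) :
    (interleave s t).length = t.length * (s.length + 1) + s.length := by
  induction t with
  | nil => simp [interleave]
  | cons b t ih => rw [interleave_cons]; simp [Nat.succ_mul]; omega

lemma take_interleave (s : List Bool) : ∀ (t : List Bool) (k r : ℕ), k ≤ t.length → r ≤ s.length →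
    (((interleave s t).take (k * (s.length + 1) + r) : List Bool) : Multiset Bool)
      = k • (↑s : Multiset Bool) + ↑(t.take k) + ↑(s.take r) := by
  intro t
  induction t with
  | nil =>
    intro k r hk hr
    have hk0 : k = 0 := by simpa using hk
    subst hk0
    have h0 : r - s.length = 0 := by omega
    simp [interleave, List.take_append, h0]
  | cons b t ih =>
    intro k r hk hr
    cases k with
    | zero =>
      have h0 : r - s.length = 0 := by omega
      rw [interleave_cons]
      simp [List.take_append, h0]
    | succ k =>
      rw [interleave_cons]
      have harith : (k+1) * (s.length + 1) + r = s.length + (1 + (k * (s.length+1) + r)) := by ring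
      rw [harith, List.take_append]
      have h1 : s.length + (1 + (k * (s.length+1) + r)) - s.length = 1 + (k * (s.length+1) + r) := by omega
      rw [h1]
      have h2 : List.take (s.length + (1 + (k * (s.length + 1) + r))) s = s := by
        apply List.take_of_length_le; omega
      rw [h2]
      have h3 : List.take (1 + (k * (s.length + 1) + r)) (b :: interleave s t)
          = b :: List.take (k * (s.length + 1) + r) (interleave s t) := by
        rw [Nat.add_comm 1]; simp [List.take_succ_cons]
      rw [h3]
      have hk' : k ≤ t.length := by simpa using hk
      have ih' := ih k r hk' hr
      have : ((↑(s ++ b :: List.take (k * (s.length + 1) + r) (interleave s t)) : Multiset Bool))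
          = ↑s + (b ::ₘ (↑(List.take (k * (s.length + 1) + r) (interleave s t)) : Multiset Bool)) := by
        simp
      rw [this, ih', List.take_succ_cons]
      have : ((↑(b :: List.take k t) : Multiset Bool)) = b ::ₘ ↑(List.take k t) := by simp
      rw [this, succ_nsmul]
      simp only [Multiset.add_cons, Multiset.cons_add]
      congr 1
      abel

lemma prefix_add_C (w : List Bool) (p q : ℕ) (hpq : p ≤ q) :
    ((w.take p : List Bool) : Multiset Bool) + Csub w p q = ↑(w.take q) := by
  have h1 : (w.take q).take p = w.take p := by rw [List.take_take, min_eq_left hpq]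
  rw [Csub, ← h1]
  exact_mod_cast congrArg (fun l : List Bool => (↑l : Multiset Bool)) (List.take_append_drop p (w.take q))

lemma rev_take_add (t : List Bool) (l : ℕ) (hl : l ≤ t.length) :
    ((t.reverse.take (t.length - l) : List Bool) : Multiset Bool) + ↑(t.take l) = ↑t := by
  have h : t.reverse.take (t.length - l) = (t.drop l).reverse := by
    rw [List.take_reverse]
    congr 2
    omega
  rw [h, Multiset.coe_reverse, Multiset.coe_add, Multiset.coe_eq_coe]
  exact (List.perm_append_comm).trans (by rw [List.take_append_drop])

lemma coe_flatMap_range {α : Type*} (a : ℕ) (f : ℕ → List α) :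
    (↑((List.range a).flatMap f) : Multiset α) = ∑ i ∈ Finset.range a, ↑(f i) := by
  induction a with
  | zero => simp
  | succ a ih => rw [List.range_succ, List.flatMap_append, Finset.sum_range_succ, ← ih]; simp

lemma coe_map_range {α : Type*} (a : ℕ) (g : ℕ → α) :
    (↑((List.range a).map g) : Multiset α) = ∑ j ∈ Finset.range a, {g j} := by
  induction a with
  | zero => simp
  | succ a ih => rw [List.range_succ, List.map_append, Finset.sum_range_succ, ← ih, ← Multiset.coe_add]; rfl

lemma subComps_eq (w : List Bool) :
    subComps w = ∑ p ∈ Finset.range (w.length+1), ∑ q ∈ Finset.range (w.length+1),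
      if p < q then ({Csub w p q} : Multiset (Multiset Bool)) else 0 := by
  rw [subComps, coe_flatMap_range, Finset.sum_range_succ (n := w.length)]
  have hlast : (∑ q ∈ Finset.range (w.length+1),
      if w.length < q then ({Csub w w.length q} : Multiset (Multiset Bool)) else 0) = 0 := by
    apply Finset.sum_eq_zero; intro q hq; rw [if_neg]; simp at hq; omega
  rw [hlast, add_zero]
  apply Finset.sum_congr rfl
  intro p hp
  simp only [Finset.mem_range] at hp
  rw [coe_map_range, ← Finset.sum_filter]
  apply Finset.sum_nbij' (i := fun j => p + j + 1) (j := fun q => q - p - 1)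
  · intro j hj
    simp only [Finset.mem_range, Finset.mem_filter] at hj ⊢
    omega
  · intro q hq
    simp only [Finset.mem_range, Finset.mem_filter] at hq ⊢
    omega
  · intro j hj; omega
  · intro q hq
    simp only [Finset.mem_range, Finset.mem_filter] at hq
    omega
  · intro j hj
    congr 1
    rw [Csub, List.drop_take]
    congr 2
    omega

lemma le_of_pos_le (n m k l r u : ℕ) (hr : r ≤ n) (hu : u ≤ n)
    (h : k*(n+1)+r ≤ l*(n+1)+u) : k ≤ l := by
  by_contra hc; push_neg at hc
  have h2 : (l+1)*(n+1) ≤ k*(n+1) := Nat.mul_le_mul_right _ hc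
  have h3 : (l+1)*(n+1) = l*(n+1)+(n+1) := by ring
  omega

lemma sigma_le (n m k l r u : ℕ) (hk : k ≤ m) (hl : l ≤ m) (hr : r ≤ n) (hu : u ≤ n)
    (h : k*(n+1)+r ≤ l*(n+1)+u) : (m-l)*(n+1)+r ≤ (m-k)*(n+1)+u := by
  have hkl : k ≤ l := le_of_pos_le n m k l r u hr hu h
  rcases eq_or_lt_of_le hkl with he | hlt'
  · subst he; omega
  · have h1 : (m-l)+1 ≤ m-k := by omega
    have h2 : ((m-l)+1)*(n+1) ≤ (m-k)*(n+1) := Nat.mul_le_mul_right _ h1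
    have h3 : ((m-l)+1)*(n+1) = (m-l)*(n+1)+(n+1) := by ring
    omega

lemma sigma_lt (n m k l r u : ℕ) (hk : k ≤ m) (hl : l ≤ m) (hr : r ≤ n) (hu : u ≤ n)
    (h : k*(n+1)+r < l*(n+1)+u) : (m-l)*(n+1)+r < (m-k)*(n+1)+u := by
  have hkl : k ≤ l := le_of_pos_le n m k l r u hr hu h.le
  rcases eq_or_lt_of_le hkl with he | hlt'
  · subst he; omega
  · have h1 : (m-l)+1 ≤ m-k := by omega
    have h2 : ((m-l)+1)*(n+1) ≤ (m-k)*(n+1) := Nat.mul_le_mul_right _ h1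
    have h3 : ((m-l)+1)*(n+1) = (m-l)*(n+1)+(n+1) := by ring
    omega

lemma key (s t : List Bool) (k l r u : ℕ) (hk : k ≤ t.length) (hl : l ≤ t.length)
    (hr : r ≤ s.length) (hu : u ≤ s.length)
    (hpq : k*(s.length+1)+r ≤ l*(s.length+1)+u) :
    Csub (interleave s t) (k*(s.length+1)+r) (l*(s.length+1)+u)
      = Csub (interleave s t.reverse) ((t.length-l)*(s.length+1)+r) ((t.length-k)*(s.length+1)+u) := by
  have hpq' : (t.length-l)*(s.length+1)+r ≤ (t.length-k)*(s.length+1)+u :=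
    sigma_le s.length t.length k l r u hk hl hr hu hpq
  have E1 := prefix_add_C (interleave s t) _ _ hpq
  have E2 := prefix_add_C (interleave s t.reverse) _ _ hpq'
  rw [take_interleave s t k r hk hr, take_interleave s t l u hl hu] at E1
  rw [take_interleave s t.reverse (t.length-l) r (by rw [List.length_reverse]; omega) hr,
      take_interleave s t.reverse (t.length-k) u (by rw [List.length_reverse]; omega) hu] at E2
  have L4a := rev_take_add t l hl
  have L4b := rev_take_add t k hk
  ext b
  have e1 := congrArg (Multiset.count b) E1
  have e2 := congrArg (Multiset.count b) E2
  have e3 := congrArg (Multiset.count b) L4a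
  have e4 := congrArg (Multiset.count b) L4b
  simp only [Multiset.count_add, Multiset.count_nsmul] at e1 e2 e3 e4
  have hmul : (t.length - l) * Multiset.count b (↑s : Multiset Bool)
        + l * Multiset.count b (↑s : Multiset Bool)
      = (t.length - k) * Multiset.count b (↑s : Multiset Bool)
        + k * Multiset.count b (↑s : Multiset Bool) := by
    rw [← add_mul, ← add_mul]; congr 1; omega
  set A := k * Multiset.count b (↑s : Multiset Bool) with hA
  set B := l * Multiset.count b (↑s : Multiset Bool) with hB
  set D1 := (t.length - l) * Multiset.count b (↑s : Multiset Bool) with hD1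
  set D2 := (t.length - k) * Multiset.count b (↑s : Multiset Bool) with hD2
  omega

lemma decomp_div (a r n : ℕ) (hr : r < n+1) : (a*(n+1)+r)/(n+1) = a := by
  rw [add_comm, Nat.add_mul_div_right _ _ (Nat.succ_pos n), Nat.div_eq_of_lt hr, zero_add]

lemma div_le_of_le (n m p : ℕ) (hp : p ≤ m*(n+1)+n) : p/(n+1) ≤ m := by
  have h1 := Nat.div_le_div_right (c := n+1) hp
  rwa [decomp_div m n n (by omega)] at h1

lemma decomp_mod (a r n : ℕ) (hr : r < n+1) : (a*(n+1)+r) % (n+1) = r := by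
  rw [add_comm, Nat.add_mul_mod_self_right, Nat.mod_eq_of_lt hr]


lemma decomp_exists (n m p : ℕ) (hp : p ≤ m*(n+1)+n) :
    ∃ k r, k ≤ m ∧ r ≤ n ∧ p = k*(n+1)+r ∧ p/(n+1) = k ∧ p%(n+1) = r := by
  refine ⟨p/(n+1), p%(n+1), div_le_of_le n m p hp, ?_, ?_, rfl, rfl⟩
  · have := Nat.mod_lt p (y := n+1) (by omega); omega
  · rw [mul_comm]; exact (Nat.div_add_mod p (n+1)).symm

lemma sigma_bound (n m l r : ℕ) (hr : r ≤ n) : (m-l)*(n+1)+r ≤ m*(n+1)+n :=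
  add_le_add (Nat.mul_le_mul_right _ (Nat.sub_le m l)) hr

theorem stmt1 (s t : List Bool) :
    Equicomposable (interleave s t) (interleave s t.reverse) := by
  unfold Equicomposable
  have hlen2 : (interleave s t.reverse).length = (interleave s t).length := by
    rw [interleave_length, interleave_length, List.length_reverse]
  rw [subComps_eq, subComps_eq, hlen2]
  have hLval : (interleave s t).length = t.length * (s.length+1) + s.length :=
    interleave_length s t
  rw [← Finset.sum_product' (s := Finset.range ((interleave s t).length+1))
        (t := Finset.range ((interleave s t).length+1)),
      ← Finset.sum_product' (s := Finset.range ((interleave s t).length+1))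
        (t := Finset.range ((interleave s t).length+1)),
      ← Finset.sum_filter, ← Finset.sum_filter]
  apply Finset.sum_nbij'
    (i := fun pq : ℕ×ℕ => ((t.length - pq.2/(s.length+1))*(s.length+1) + pq.1 % (s.length+1),
      (t.length - pq.1/(s.length+1))*(s.length+1) + pq.2 % (s.length+1)))
    (j := fun pq : ℕ×ℕ => ((t.length - pq.2/(s.length+1))*(s.length+1) + pq.1 % (s.length+1),
      (t.length - pq.1/(s.length+1))*(s.length+1) + pq.2 % (s.length+1)))
  · rintro ⟨p, q⟩ hpq
    simp only [Finset.mem_filter, Finset.mem_product, Finset.mem_range] at hpq ⊢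
    obtain ⟨⟨hp, hq⟩, hlt⟩ := hpq
    obtain ⟨k, r, hk, hr, hpd, hdiv1, hmod1⟩ := decomp_exists s.length t.length p (by omega)
    obtain ⟨l, u, hl, hu, hqd, hdiv2, hmod2⟩ := decomp_exists s.length t.length q (by omega)
    rw [hdiv1, hmod1, hdiv2, hmod2]
    have hb1 := sigma_bound s.length t.length l r hr
    have hb2 := sigma_bound s.length t.length k u hu
    have hs := sigma_lt s.length t.length k l r u hk hl hr hu (by omega)
    exact ⟨⟨by omega, by omega⟩, hs⟩
  · rintro ⟨p, q⟩ hpq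
    simp only [Finset.mem_filter, Finset.mem_product, Finset.mem_range] at hpq ⊢
    obtain ⟨⟨hp, hq⟩, hlt⟩ := hpq
    obtain ⟨k, r, hk, hr, hpd, hdiv1, hmod1⟩ := decomp_exists s.length t.length p (by omega)
    obtain ⟨l, u, hl, hu, hqd, hdiv2, hmod2⟩ := decomp_exists s.length t.length q (by omega)
    rw [hdiv1, hmod1, hdiv2, hmod2]
    have hb1 := sigma_bound s.length t.length l r hr
    have hb2 := sigma_bound s.length t.length k u hu
    have hs := sigma_lt s.length t.length k l r u hk hl hr hu (by omega)
    exact ⟨⟨by omega, by omega⟩, hs⟩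
  · rintro ⟨p, q⟩ hpq
    simp only [Finset.mem_filter, Finset.mem_product, Finset.mem_range] at hpq
    obtain ⟨⟨hp, hq⟩, hlt⟩ := hpq
    obtain ⟨k, r, hk, hr, hpd, hdiv1, hmod1⟩ := decomp_exists s.length t.length p (by omega)
    obtain ⟨l, u, hl, hu, hqd, hdiv2, hmod2⟩ := decomp_exists s.length t.length q (by omega)
    simp only [hdiv1, hmod1, hdiv2, hmod2,
      decomp_div _ _ _ (by omega : r < s.length + 1),
      decomp_div _ _ _ (by omega : u < s.length + 1),
      decomp_mod _ _ _ (by omega : r < s.length + 1),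
      decomp_mod _ _ _ (by omega : u < s.length + 1),
      Nat.sub_sub_self hk, Nat.sub_sub_self hl]
    rw [← hpd, ← hqd]
  · rintro ⟨p, q⟩ hpq
    simp only [Finset.mem_filter, Finset.mem_product, Finset.mem_range] at hpq
    obtain ⟨⟨hp, hq⟩, hlt⟩ := hpq
    obtain ⟨k, r, hk, hr, hpd, hdiv1, hmod1⟩ := decomp_exists s.length t.length p (by omega)
    obtain ⟨l, u, hl, hu, hqd, hdiv2, hmod2⟩ := decomp_exists s.length t.length q (by omega)
    simp only [hdiv1, hmod1, hdiv2, hmod2,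
      decomp_div _ _ _ (by omega : r < s.length + 1),
      decomp_div _ _ _ (by omega : u < s.length + 1),
      decomp_mod _ _ _ (by omega : r < s.length + 1),
      decomp_mod _ _ _ (by omega : u < s.length + 1),
      Nat.sub_sub_self hk, Nat.sub_sub_self hl]
    rw [← hpd, ← hqd]
  · rintro ⟨p, q⟩ hpq
    simp only [Finset.mem_filter, Finset.mem_product, Finset.mem_range] at hpq
    obtain ⟨⟨hp, hq⟩, hlt⟩ := hpq
    obtain ⟨k, r, hk, hr, hpd, hdiv1, hmod1⟩ := decomp_exists s.length t.length p (by omega)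
    obtain ⟨l, u, hl, hu, hqd, hdiv2, hmod2⟩ := decomp_exists s.length t.length q (by omega)
    simp only [hdiv1, hmod1, hdiv2, hmod2]
    congr 1
    rw [hpd, hqd]
    exact key s t k l r u hk hl hr hu (by omega)
end

section
/- For any binary string s of length n, P_s(x,y) · P_s(1/x, 1/y) = (n+1) + S_s(x,y) + S_s(1/x, 1/y), where S_s is the polynomial encoding the composition multiset of s. -/
open MvPolynomial

/- ===== auxiliary lemmas for stmt5 ===== -/

private lemma sum_flatMap' {M : Type*} [AddCommMonoid M] (l : List ℕ) (g : ℕ → List M) :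
    (l.flatMap g).sum = (l.map fun x => (g x).sum).sum := by
  induction l with
  | nil => simp
  | cons a t ih => simp [List.flatMap_cons, ih]

private lemma square_split {M : Type*} [AddCommMonoid M] (N : ℕ) (f : ℕ → ℕ → M) :
    ∑ i ∈ Finset.range N, ∑ j ∈ Finset.range N, f i j
      = (∑ i ∈ Finset.range N, f i i)
        + (∑ i ∈ Finset.range N, ∑ j ∈ Finset.range i, f i j)
        + (∑ i ∈ Finset.range N, ∑ j ∈ Finset.range i, f j i) := by
  induction N with
  | zero => simp
  | succ n ih =>
    simp only [Finset.sum_range_succ, Finset.sum_add_distrib, ih]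
    abel

private lemma tri_reindex {M : Type*} [AddCommMonoid M] (n : ℕ) (g : ℕ → ℕ → M) :
    ∑ e ∈ Finset.range (n+1), ∑ a ∈ Finset.range e, g a e
      = ∑ a ∈ Finset.range n, ∑ k ∈ Finset.range (n - a), g a (a + k + 1) := by
  induction n with
  | zero => simp
  | succ n ih =>
    rw [Finset.sum_range_succ, ih,
      Finset.sum_range_succ (fun a => ∑ k ∈ Finset.range (n + 1 - a), g a (a + k + 1))]
    have h : ∀ a ∈ Finset.range n, ∑ k ∈ Finset.range (n + 1 - a), g a (a + k + 1)
        = (∑ k ∈ Finset.range (n - a), g a (a + k + 1)) + g a (n + 1) := by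
      intro a ha
      rw [Finset.mem_range] at ha
      have h1 : n + 1 - a = (n - a) + 1 := by omega
      rw [h1, Finset.sum_range_succ]
      congr 2
      omega
    rw [Finset.sum_congr rfl h, Finset.sum_add_distrib, Finset.sum_range_succ]
    have h2 : n + 1 - n = 1 := by omega
    rw [h2]
    simp only [Finset.sum_range_one]
    abel

private lemma count_tf (l : List Bool) : l.count true + l.count false = l.length := by
  induction l with
  | nil => simp
  | cons b t ih => cases b <;> simp [List.count_cons, ih] <;> omega

private lemma counts_fact (s : List Bool) (a k : ℕ) (h : a + k + 1 ≤ s.length) :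
    (s.take (a+k+1)).count false
        = (s.take a).count false + ((s.drop a).take (k+1)).count false ∧
    (a+k+1) - (s.take (a+k+1)).count false
        = (a - (s.take a).count false) + ((s.drop a).take (k+1)).count true := by
  have h1 : s.take (a + k + 1) = s.take a ++ (s.drop a).take (k+1) := by
    rw [show a + k + 1 = a + (k + 1) by omega, List.take_add]
  have hc : (s.take (a+k+1)).count false
      = (s.take a).count false + ((s.drop a).take (k+1)).count false := by
    rw [h1, List.count_append]
  refine ⟨hc, ?_⟩
  have hlen : ((s.drop a).take (k+1)).length = k + 1 := by
    simp [List.length_take, List.length_drop]; omega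
  have htf := count_tf ((s.drop a).take (k+1))
  have hA : (s.take a).count false ≤ a := by
    have := List.count_le_length (l := s.take a) (a := false)
    simp [List.length_take] at this; omega
  omega

private lemma fld1 {K : Type*} [Field K] (x y : K) (hx : x ≠ 0) (hy : y ≠ 0)
    (P Q c d : ℕ) : (x^(P+c) * y^(Q+d)) * (x⁻¹^P * y⁻¹^Q) = x^c * y^d := by
  rw [inv_pow, inv_pow, pow_add, pow_add]
  field_simp

private lemma fld2 {K : Type*} [Field K] (x y : K) (hx : x ≠ 0) (hy : y ≠ 0)
    (P Q c d : ℕ) : (x^P * y^Q) * (x⁻¹^(P+c) * y⁻¹^(Q+d)) = x⁻¹^c * y⁻¹^d := by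
  rw [inv_pow, inv_pow, inv_pow, inv_pow, pow_add, pow_add]
  field_simp

theorem stmt5 (s : List Bool) :
    toF (gen s) * invEval (gen s)
      = ((s.length + 1 : ℕ) : F) + toF (compPoly s) + invEval (compPoly s) := by
  have hX0 : toF (X 0) ≠ 0 := by
    simp only [toF, ne_eq, IsFractionRing.to_map_eq_zero_iff]
    exact MvPolynomial.X_ne_zero 0
  have hX1 : toF (X 1) ≠ 0 := by
    simp only [toF, ne_eq, IsFractionRing.to_map_eq_zero_iff]
    exact MvPolynomial.X_ne_zero 1
  set n := s.length with hn
  set x : F := toF (X 0) with hx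
  set y : F := toF (X 1) with hy
  have hgen1 : toF (gen s) = ∑ i ∈ Finset.range (n+1),
      x ^ ((s.take i).count false) * y ^ (i - (s.take i).count false) := by
    simp [toF, gen, map_sum, hx, hy]
    rfl
  have hgen2 : invEval (gen s) = ∑ i ∈ Finset.range (n+1),
      x⁻¹ ^ ((s.take i).count false) * y⁻¹ ^ (i - (s.take i).count false) := by
    simp [invEval, gen, map_sum, toF, hx, hy]
    rfl
  have hc1 : toF (compPoly s) = ∑ a ∈ Finset.range n, ∑ k ∈ Finset.range (n - a),
      x ^ (((s.drop a).take (k+1)).count false)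
        * y ^ (((s.drop a).take (k+1)).count true) := by
    show (algebraMap (MvPolynomial (Fin 2) ℤ) F) _ = _
    rw [compPoly, map_list_sum, List.map_flatMap, sum_flatMap']
    simp [List.map_map, Function.comp_def, toF, hx, hy]
    rfl
  have hc2 : invEval (compPoly s) = ∑ a ∈ Finset.range n, ∑ k ∈ Finset.range (n - a),
      x⁻¹ ^ (((s.drop a).take (k+1)).count false)
        * y⁻¹ ^ (((s.drop a).take (k+1)).count true) := by
    show (MvPolynomial.aeval _) _ = _
    rw [compPoly, map_list_sum, List.map_flatMap, sum_flatMap']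
    simp [List.map_map, Function.comp_def, toF, hx, hy]
    rfl
  rw [hgen1, hgen2, hc1, hc2, Finset.sum_mul_sum]
  rw [square_split (n+1) (fun i j =>
    (x ^ ((s.take i).count false) * y ^ (i - (s.take i).count false))
      * (x⁻¹ ^ ((s.take j).count false) * y⁻¹ ^ (j - (s.take j).count false)))]
  congr 1
  congr 1
  · -- diagonal
    have hd : ∀ i ∈ Finset.range (n+1),
        (x ^ ((s.take i).count false) * y ^ (i - (s.take i).count false))
          * (x⁻¹ ^ ((s.take i).count false) * y⁻¹ ^ (i - (s.take i).count false))
        = (1 : F) := by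
      intro i _
      rw [mul_mul_mul_comm, ← mul_pow, ← mul_pow, mul_inv_cancel₀ hX0, mul_inv_cancel₀ hX1, one_pow, one_pow, mul_one]
    rw [Finset.sum_congr rfl hd, Finset.sum_const, Finset.card_range]
    simp
  · -- lower triangle: t (a+k+1) * t' a
    rw [tri_reindex n (fun a e =>
      (x ^ ((s.take e).count false) * y ^ (e - (s.take e).count false))
        * (x⁻¹ ^ ((s.take a).count false) * y⁻¹ ^ (a - (s.take a).count false)))]
    refine Finset.sum_congr rfl fun a ha => Finset.sum_congr rfl fun k hk => ?_
    rw [Finset.mem_range] at ha hk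
    obtain ⟨h1, h2⟩ := counts_fact s a k (by omega)
    rw [h1] at h2
    rw [h1, h2]
    exact fld1 x y hX0 hX1 _ _ _ _
  · -- upper triangle
    rw [tri_reindex n (fun a e =>
      (x ^ ((s.take a).count false) * y ^ (a - (s.take a).count false))
        * (x⁻¹ ^ ((s.take e).count false) * y⁻¹ ^ (e - (s.take e).count false)))]
    refine Finset.sum_congr rfl fun a ha => Finset.sum_congr rfl fun k hk => ?_
    rw [Finset.mem_range] at ha hk
    obtain ⟨h1, h2⟩ := counts_fact s a k (by omega)
    rw [h1] at h2
    rw [h1, h2]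
    exact fld2 x y hX0 hX1 _ _ _ _
end

section
/- If P(x,y) ∈ ℤ[x,y] is a generating polynomial and the univariate polynomial P(x,x) is irreducible over ℤ, then P(x,y) is irreducible over ℤ[x,y]. More generally, the number of irreducible factors of P(x,y) is at most the number of irreducible factors of P(x,x). -/
open MvPolynomial

namespace Stmt12Aux

lemma coeff_zero_of_lt_degree {p : MvPolynomial (Fin 2) ℤ} {d : Fin 2 →₀ ℕ}
    (h : p.totalDegree < d.degree) : coeff d p = 0 :=
  coeff_eq_zero_of_totalDegree_lt (by simpa [Finsupp.degree_apply] using h)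

lemma hc_totalDegree_ne_zero {p : MvPolynomial (Fin 2) ℤ} (hp : p ≠ 0) :
    homogeneousComponent p.totalDegree p ≠ 0 := by
  obtain ⟨d, hd, hdeg⟩ := p.support.exists_mem_eq_sup
    (support_nonempty.mpr hp) (fun s => s.sum fun _ e => e)
  intro h
  have hdd : d.degree = p.totalDegree := by
    rw [totalDegree, hdeg]
    simp [Finsupp.degree_apply, Finsupp.sum]
  have : coeff d (homogeneousComponent p.totalDegree p) = coeff d p := by
    rw [coeff_homogeneousComponent, if_pos hdd]
  rw [h] at this
  exact (mem_support_iff.mp hd) this.symm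

lemma degree_add (u v : Fin 2 →₀ ℕ) : (u + v).degree = u.degree + v.degree := by
  simp [Finsupp.degree_eq_weight_one, map_add]

lemma lead_mul (a b : MvPolynomial (Fin 2) ℤ) :
    homogeneousComponent (a.totalDegree + b.totalDegree) (a * b)
      = homogeneousComponent a.totalDegree a * homogeneousComponent b.totalDegree b := by
  ext d
  rw [coeff_homogeneousComponent]
  by_cases hd : d.degree = a.totalDegree + b.totalDegree
  · rw [if_pos hd, coeff_mul, coeff_mul]
    refine Finset.sum_congr rfl ?_
    rintro ⟨u, v⟩ huv
    dsimp only
    rw [Finset.HasAntidiagonal.mem_antidiagonal] at huv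
    have hsum : u.degree + v.degree = a.totalDegree + b.totalDegree := by
      rw [← degree_add, huv, hd]
    rw [coeff_homogeneousComponent, coeff_homogeneousComponent]
    by_cases hu : u.degree = a.totalDegree
    · rw [if_pos hu, if_pos (by omega)]
    · rcases lt_or_gt_of_ne hu with h | h
      · rw [if_neg hu, coeff_zero_of_lt_degree (p := b) (by omega), mul_zero, zero_mul]
      · rw [if_neg hu, coeff_zero_of_lt_degree (p := a) (by omega), zero_mul, zero_mul]
  · rw [if_neg hd]
    exact (((homogeneousComponent_isHomogeneous _ a).mul
      (homogeneousComponent_isHomogeneous _ b)).coeff_eq_zero hd).symm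

lemma totalDegree_mul_eq {a b : MvPolynomial (Fin 2) ℤ} (ha : a ≠ 0) (hb : b ≠ 0) :
    (a * b).totalDegree = a.totalDegree + b.totalDegree := by
  refine le_antisymm (totalDegree_mul a b) ?_
  by_contra h
  push_neg at h
  have h0 := homogeneousComponent_eq_zero (φ := a * b)
    (n := a.totalDegree + b.totalDegree) h
  rw [lead_mul] at h0
  exact mul_ne_zero (hc_totalDegree_ne_zero ha) (hc_totalDegree_ne_zero hb) h0

lemma natDegree_toUni_le (p : MvPolynomial (Fin 2) ℤ) :
    (toUni p).natDegree ≤ p.totalDegree := by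
  rw [toUni]
  conv_lhs => rw [p.as_sum]
  rw [map_sum]
  refine Polynomial.natDegree_sum_le_of_forall_le _ _ fun m hm => ?_
  rw [aeval_monomial]
  have hp : (Finsupp.prod m fun _ k => (Polynomial.X : Polynomial ℤ) ^ k)
      = Polynomial.X ^ (m.sum fun _ k => k) := by
    rw [Finsupp.prod, Finsupp.sum, Finset.prod_pow_eq_pow_sum]
  rw [hp]
  refine (Polynomial.natDegree_mul_le).trans ?_
  have h1 : (algebraMap ℤ (Polynomial ℤ) (coeff m p)).natDegree = 0 := by
    rw [Polynomial.algebraMap_apply]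
    exact Polynomial.natDegree_C _
  rw [h1, Polynomial.natDegree_X_pow, zero_add]
  exact le_totalDegree hm


lemma toUni_gen (s : List Bool) :
    toUni (gen s) = ∑ i ∈ Finset.range (s.length + 1), (Polynomial.X : Polynomial ℤ) ^ i := by
  rw [toUni, gen, map_sum]
  refine Finset.sum_congr rfl fun i hi => ?_
  rw [map_mul, map_pow, map_pow, aeval_X, aeval_X, ← pow_add]
  congr 1
  have h1 : (s.take i).count false ≤ i :=
    List.count_le_length.trans (by simp [List.length_take])
  omega

lemma toUni_gen_monic (s : List Bool) : (toUni (gen s)).Monic := by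
  rw [toUni_gen]
  exact Polynomial.monic_geom_sum_X (Nat.succ_ne_zero _)

lemma natDegree_toUni_gen (s : List Bool) : (toUni (gen s)).natDegree = s.length := by
  rw [toUni_gen]
  refine le_antisymm (Polynomial.natDegree_sum_le_of_forall_le _ _ fun i hi => ?_) ?_
  · rw [Polynomial.natDegree_X_pow]
    exact Nat.lt_succ_iff.mp (Finset.mem_range.mp hi)
  · refine Polynomial.le_natDegree_of_ne_zero ?_
    rw [Polynomial.finset_sum_coeff]
    simp [Polynomial.coeff_X_pow]

lemma totalDegree_gen_le (s : List Bool) : (gen s).totalDegree ≤ s.length := by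
  rw [gen]
  refine totalDegree_finsetSum_le fun i hi => ?_
  refine (totalDegree_mul _ _).trans ?_
  have h1 : (X (0 : Fin 2) ^ ((s.take i).count false) : MvPolynomial (Fin 2) ℤ).totalDegree
      ≤ (s.take i).count false := by
    simpa using totalDegree_pow (X (0 : Fin 2) : MvPolynomial (Fin 2) ℤ) ((s.take i).count false)
  have h2 : (X (1 : Fin 2) ^ (i - (s.take i).count false) : MvPolynomial (Fin 2) ℤ).totalDegree
      ≤ i - (s.take i).count false := by
    simpa using totalDegree_pow (X (1 : Fin 2) : MvPolynomial (Fin 2) ℤ) (i - (s.take i).count false)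
  have h3 : (s.take i).count false ≤ i :=
    List.count_le_length.trans (by simp [List.length_take])
  have h4 := Finset.mem_range.mp hi
  refine le_trans (add_le_add h1 h2) (by omega)

lemma key_deg {s : List Bool} {a : MvPolynomial (Fin 2) ℤ} (h : a ∣ gen s) :
    (toUni a).natDegree = a.totalDegree ∧ toUni a ≠ 0 := by
  obtain ⟨b, hab⟩ := h
  have hg0 : toUni (gen s) ≠ 0 := (toUni_gen_monic s).ne_zero
  have hmul : toUni a * toUni b = toUni (gen s) := by
    rw [hab]; exact (map_mul (MvPolynomial.aeval fun _ => Polynomial.X) a b).symm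
  have ha0 : toUni a ≠ 0 := fun h => hg0 (by rw [← hmul, h, zero_mul])
  have hb0 : toUni b ≠ 0 := fun h => hg0 (by rw [← hmul, h, mul_zero])
  have ha0' : a ≠ 0 := fun h => ha0 (by rw [h, toUni]; simp)
  have hb0' : b ≠ 0 := fun h => hb0 (by rw [h, toUni]; simp)
  have hnd : (toUni a).natDegree + (toUni b).natDegree = s.length := by
    rw [← Polynomial.natDegree_mul ha0 hb0, hmul, natDegree_toUni_gen]
  have htd : a.totalDegree + b.totalDegree ≤ s.length := by
    rw [← totalDegree_mul_eq ha0' hb0', ← hab]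
    exact totalDegree_gen_le s
  have h1 := natDegree_toUni_le a
  have h2 := natDegree_toUni_le b
  exact ⟨by omega, ha0⟩

lemma isUnit_of_toUni_isUnit {s : List Bool} {a : MvPolynomial (Fin 2) ℤ}
    (h : a ∣ gen s) (hu : IsUnit (toUni a)) : IsUnit a := by
  have hd := (key_deg h).1
  have h0 : a.totalDegree = 0 := by
    rw [← hd]; exact Polynomial.natDegree_eq_zero_of_isUnit hu
  have hhom : a ∈ homogeneousSubmodule (Fin 2) ℤ 0 :=
    (mem_homogeneousSubmodule 0 a).mpr (isHomogeneous_of_totalDegree_zero _ h0)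
  have h1 := homogeneousComponent_of_mem (m := 0) hhom
  rw [if_pos rfl] at h1
  obtain ⟨c, hc⟩ : ∃ c, a = C c :=
    ⟨coeff 0 a, h1.symm.trans (homogeneousComponent_zero a)⟩
  have htu : toUni a = Polynomial.C c := by
    rw [hc, toUni, aeval_C]
    simp [Polynomial.algebraMap_apply]
  rw [htu] at hu
  rw [hc]
  exact (Polynomial.isUnit_C.mp hu).map (C : ℤ →+* MvPolynomial (Fin 2) ℤ)


open UniqueFactorizationMonoid in
lemma exists_irred_factorization (fs : Multiset (Polynomial ℤ))
    (h : ∀ q ∈ fs, q ≠ 0 ∧ ¬ IsUnit q) :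
    ∃ hs : Multiset (Polynomial ℤ), (∀ q ∈ hs, Irreducible q) ∧
      Associated hs.prod fs.prod ∧ Multiset.card fs ≤ Multiset.card hs := by
  induction fs using Multiset.induction with
  | empty => exact ⟨0, by simp, by simp, le_refl _⟩
  | cons a t ih =>
    obtain ⟨hs, h1, h2, h3⟩ := ih fun q hq => h q (Multiset.mem_cons_of_mem hq)
    obtain ⟨ha0, hau⟩ := h a (Multiset.mem_cons_self a t)
    refine ⟨factors a + hs, ?_, ?_, ?_⟩
    · intro q hq
      rcases Multiset.mem_add.mp hq with hq | hq
      exacts [irreducible_of_factor q hq, h1 q hq]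
    · rw [Multiset.prod_add, Multiset.prod_cons]
      exact (factors_prod ha0).mul_mul h2
    · rw [Multiset.card_add, Multiset.card_cons]
      have hne : Multiset.card (factors a) ≠ 0 := by
        intro hcard
        rw [Multiset.card_eq_zero] at hcard
        have := factors_prod ha0
        rw [hcard, Multiset.prod_zero] at this
        exact hau (associated_one_iff_isUnit.mp this.symm)
      omega

lemma part1 (s : List Bool) (fs : Multiset (MvPolynomial (Fin 2) ℤ))
    (gs : Multiset (Polynomial ℤ)) (hfs : ∀ q ∈ fs, Irreducible q)
    (hprod : fs.prod = gen s) (hgs : ∀ q ∈ gs, Irreducible q)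
    (hgprod : gs.prod = toUni (gen s)) :
    Multiset.card fs ≤ Multiset.card gs := by
  have himg : ∀ q ∈ fs, toUni q ≠ 0 ∧ ¬ IsUnit (toUni q) := by
    intro q hq
    have hdvd : q ∣ gen s := hprod ▸ Multiset.dvd_prod hq
    refine ⟨(key_deg hdvd).2, fun hu => (hfs q hq).not_isUnit ?_⟩
    exact isUnit_of_toUni_isUnit hdvd hu
  obtain ⟨hs, h1, h2, h3⟩ := exists_irred_factorization (fs.map toUni) (by
    rintro q hq
    obtain ⟨p, hp, rfl⟩ := Multiset.mem_map.mp hq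
    exact himg p hp)
  have hprod' : (fs.map toUni).prod = toUni (gen s) := by
    rw [← hprod]
    exact (map_multiset_prod (MvPolynomial.aeval fun _ => Polynomial.X :
      MvPolynomial (Fin 2) ℤ →ₐ[ℤ] Polynomial ℤ) fs).symm
  have hrel := UniqueFactorizationMonoid.factors_unique h1 hgs
    (by rw [hgprod, ← hprod']; exact h2)
  have hcard := Multiset.card_eq_card_of_rel hrel
  rw [Multiset.card_map] at h3
  omega

end Stmt12Aux

theorem stmt12 (s : List Bool) :
    (∀ (fs : Multiset (MvPolynomial (Fin 2) ℤ)) (gs : Multiset (Polynomial ℤ)),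
        (∀ q ∈ fs, Irreducible q) → fs.prod = gen s →
        (∀ q ∈ gs, Irreducible q) → gs.prod = toUni (gen s) →
        Multiset.card fs ≤ Multiset.card gs) ∧
      (Irreducible (toUni (gen s)) → Irreducible (gen s)) := by
  constructor
  · exact Stmt12Aux.part1 s
  · intro hirr
    constructor
    · intro hu
      exact hirr.not_isUnit (hu.map (MvPolynomial.aeval fun _ => Polynomial.X :
        MvPolynomial (Fin 2) ℤ →ₐ[ℤ] Polynomial ℤ))
    · intro a b hab
      have h2 : toUni (gen s) = toUni a * toUni b := by
        rw [hab]
        exact map_mul (MvPolynomial.aeval fun _ => Polynomial.X) a b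
      rcases hirr.isUnit_or_isUnit h2 with h | h
      · exact Or.inl (Stmt12Aux.isUnit_of_toUni_isUnit ⟨b, hab⟩ h)
      · exact Or.inr (Stmt12Aux.isUnit_of_toUni_isUnit ⟨a, hab.trans (mul_comm a b)⟩ h)
end

section
/- A generating polynomial cannot have two factors that are reciprocals of each other: if A(x,y)·A*(x,y) divides a generating polynomial P(x,y) in ℤ[x,y], then A is a unit. -/
open MvPolynomial

lemma real_pow_eq_one {x : ℝ} (hx : 0 ≤ x) {m : ℕ} (hm : m ≠ 0) (h : x ^ m = 1) : x = 1 := by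
  rcases lt_trichotomy x 1 with hlt | heq | hgt
  · have := pow_lt_one₀ hx hlt hm; linarith
  · exact heq
  · have := one_lt_pow₀ hgt hm; linarith

lemma toUni_monomial (d : Fin 2 →₀ ℕ) (c : ℤ) :
    toUni (monomial d c) = Polynomial.C c * Polynomial.X ^ (d 0 + d 1) := by
  rw [toUni, MvPolynomial.aeval_monomial]
  rw [Finsupp.prod_fintype _ _ (fun i => pow_zero _)]
  rw [Fin.prod_univ_two, ← pow_add]
  simp [algebraMap_int_eq, Polynomial.C_eq_intCast]

lemma toUni_sum {ι : Type*} (t : Finset ι) (f : ι → MvPolynomial (Fin 2) ℤ) :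
    toUni (∑ i ∈ t, f i) = ∑ i ∈ t, toUni (f i) :=
  map_sum (MvPolynomial.aeval _) f t

lemma toUni_mul (p q : MvPolynomial (Fin 2) ℤ) : toUni (p * q) = toUni p * toUni q :=
  map_mul _ _ _

lemma reflect_sum {ι : Type*} (N : ℕ) (t : Finset ι) (f : ι → Polynomial ℤ) :
    Polynomial.reflect N (∑ i ∈ t, f i) = ∑ i ∈ t, Polynomial.reflect N (f i) := by
  classical
  induction t using Finset.induction with
  | empty => simp
  | insert _ _ h ih => rw [Finset.sum_insert h, Finset.sum_insert h, Polynomial.reflect_add, ih]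

lemma mem_support_le {A : MvPolynomial (Fin 2) ℤ} {m : Fin 2 →₀ ℕ} (hm : m ∈ A.support)
    (i : Fin 2) : m i ≤ A.degreeOf i := by
  rw [MvPolynomial.degreeOf_eq_sup]; exact Finset.le_sup (f := fun m => m i) hm

lemma toUni_gen (s : List Bool) :
    toUni (gen s) = ∑ i ∈ Finset.range (s.length + 1), Polynomial.X ^ i := by
  rw [gen, toUni_sum]
  refine Finset.sum_congr rfl fun i hi => ?_
  have hc : (s.take i).count false ≤ i := by
    have h1 : (s.take i).count false ≤ (s.take i).length := List.count_le_length
    have h2 : (s.take i).length = min i s.length := List.length_take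
    omega
  rw [toUni, map_mul, map_pow, map_pow, MvPolynomial.aeval_X, MvPolynomial.aeval_X, ← pow_add,
    Nat.add_sub_cancel' hc]

lemma toUni_recip (A : MvPolynomial (Fin 2) ℤ) :
    toUni (recip A) = Polynomial.reflect (A.degreeOf 0 + A.degreeOf 1) (toUni A) := by
  set D := A.degreeOf 0 + A.degreeOf 1 with hD
  rw [recip, toUni_sum]
  conv_rhs => rw [A.as_sum, toUni_sum, reflect_sum]
  refine Finset.sum_congr rfl fun m hm => ?_
  have h0 := mem_support_le hm 0
  have h1 := mem_support_le hm 1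
  rw [toUni_monomial, toUni_monomial, Polynomial.reflect_C_mul_X_pow,
    Polynomial.revAt_le (by omega)]
  congr 2
  simp only [Finsupp.add_apply, Finsupp.single_apply]
  norm_num
  omega

lemma natDegree_toUni_le (A : MvPolynomial (Fin 2) ℤ) :
    (toUni A).natDegree ≤ A.degreeOf 0 + A.degreeOf 1 := by
  conv_lhs => rw [A.as_sum, toUni_sum]
  refine Polynomial.natDegree_sum_le_of_forall_le _ _ fun m hm => ?_
  rw [toUni_monomial]
  refine le_trans (Polynomial.natDegree_C_mul_le _ _) ?_
  rw [Polynomial.natDegree_X_pow]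
  have h0 := mem_support_le hm 0
  have h1 := mem_support_le hm 1
  omega

theorem stmt13 (s : List Bool) (A : MvPolynomial (Fin 2) ℤ)
    (h : A * recip A ∣ gen s) : IsUnit A := by
  classical
  set n := s.length with hn
  set P : Polynomial ℤ := ∑ i ∈ Finset.range (n + 1), Polynomial.X ^ i with hPdef
  have coeff0P : P.coeff 0 = 1 := by
    rw [hPdef, Polynomial.finset_sum_coeff]
    simp [Polynomial.coeff_X_pow, Finset.sum_ite_eq]
  set u := toUni A with hu
  set v := toUni (recip A) with hv
  have hdvdP : u * v ∣ P := by
    obtain ⟨Q, hQ⟩ := h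
    exact ⟨toUni Q, by rw [hPdef, ← toUni_gen s, hQ, toUni_mul, toUni_mul]⟩
  set D := A.degreeOf 0 + A.degreeOf 1 with hDdef
  have hvrefl : v = Polynomial.reflect D u := toUni_recip A
  have hXnd : ¬ (Polynomial.X ∣ P) := by
    rw [Polynomial.X_dvd_iff, coeff0P]; norm_num
  have hu0 : u.coeff 0 ≠ 0 := fun h0 =>
    hXnd (dvd_trans (Polynomial.X_dvd_iff.mpr h0) (dvd_trans (dvd_mul_right u v) hdvdP))
  have hv0 : v.coeff 0 ≠ 0 := fun h0 =>
    hXnd (dvd_trans (Polynomial.X_dvd_iff.mpr h0) (dvd_trans (dvd_mul_left v u) hdvdP))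
  have hDu : u.coeff D ≠ 0 := by
    rw [hvrefl, Polynomial.coeff_reflect, Polynomial.revAt_le (Nat.zero_le _), Nat.sub_zero]
      at hv0
    exact hv0
  have hndu : u.natDegree = D :=
    le_antisymm (natDegree_toUni_le A) (Polynomial.le_natDegree_of_ne_zero hDu)
  rcases Nat.eq_zero_or_pos D with hD0 | hDpos
  · -- constant case
    have hdeg0 : A.degreeOf 0 = 0 ∧ A.degreeOf 1 = 0 := by omega
    have hA : A = MvPolynomial.C (MvPolynomial.coeff 0 A) := by
      ext m
      rw [MvPolynomial.coeff_C]
      split_ifs with hm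
      · rw [← hm]
      · by_contra hne
        have hmem : m ∈ A.support := MvPolynomial.mem_support_iff.mpr hne
        have h0 := mem_support_le hmem 0
        have h1 := mem_support_le hmem 1
        have hm0 : m = 0 := by
          have e0 : m 0 = 0 := by omega
          have e1 : m 1 = 0 := by omega
          ext i; fin_cases i
          · simpa using e0
          · simpa using e1
        exact hm hm0.symm
    set c := MvPolynomial.coeff 0 A with hc
    have huC : u = Polynomial.C c := by
      rw [hu, hA, toUni, MvPolynomial.aeval_C, Polynomial.algebraMap_eq]
    have hvC : v = Polynomial.C c := by
      rw [hvrefl, hD0, huC, ← mul_one (Polynomial.C c), ← pow_zero (Polynomial.X : Polynomial ℤ),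
        Polynomial.reflect_C_mul_X_pow]
      simp
    have hdvd1 : c * c ∣ (1 : ℤ) := by
      have : Polynomial.C (c * c) ∣ P := by
        rw [map_mul]; rw [huC, hvC] at hdvdP; exact hdvdP
      have := (Polynomial.C_dvd_iff_dvd_coeff _ _).mp this 0
      rwa [coeff0P] at this
    have hcu : IsUnit c := isUnit_of_mul_isUnit_left (isUnit_of_dvd_one hdvd1)
    rw [hA]; exact hcu.map MvPolynomial.C
  · -- nonconstant case: contradiction via complex roots
    exfalso
    set φ := Int.castRingHom ℂ with hφ
    set uC := u.map φ with huC
    have hune : u ≠ 0 := fun h0 => hu0 (by rw [h0]; simp)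
    have huCne : uC ≠ 0 := by
      rw [huC, Ne, Polynomial.map_eq_zero_iff (by exact_mod_cast Int.cast_injective)]
      exact hune
    have hnduC : uC.natDegree = D := by
      rw [huC, Polynomial.natDegree_map_eq_of_injective (by exact_mod_cast Int.cast_injective),
        hndu]
    have hdegpos : 0 < uC.degree := by
      rw [Polynomial.degree_eq_natDegree huCne, hnduC]
      exact_mod_cast hDpos
    obtain ⟨α, hα⟩ := Complex.exists_root hdegpos
    have hPdvdC : uC * v.map φ ∣ P.map φ := by
      rw [huC, ← Polynomial.map_mul]; exact Polynomial.map_dvd φ hdvdP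
    have hPα : (P.map φ).eval α = 0 := by
      obtain ⟨w, hw⟩ := dvd_trans (dvd_mul_right uC (v.map φ)) hPdvdC
      rw [hw, Polynomial.eval_mul, hα.eq_zero, zero_mul]
    have hsum : ∑ i ∈ Finset.range (n + 1), α ^ i = 0 := by
      have : (P.map φ).eval α = ∑ i ∈ Finset.range (n + 1), α ^ i := by
        rw [hPdef, Polynomial.map_sum]
        simp [Polynomial.eval_finset_sum]
      rw [this] at hPα
      exact hPα
    have hm1 : α ^ (n + 1) = 1 := by
      have := geom_sum_mul α (n + 1)
      rw [hsum, zero_mul] at this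
      have := this.symm
      rwa [sub_eq_zero] at this
    have hα0 : α ≠ 0 := by
      intro h0
      rw [h0, zero_pow (Nat.succ_ne_zero n)] at hm1
      exact zero_ne_one hm1
    have hconj0 : (starRingEnd ℂ) α ≠ 0 := star_ne_zero.mpr hα0
    have hnorm : α * (starRingEnd ℂ) α = 1 := by
      have h2 : Complex.normSq α = 1 := by
        have h3 : (Complex.normSq α : ℝ) ^ (n + 1) = 1 := by
          have := congrArg Complex.normSq hm1
          rw [map_pow] at this
          simpa using this
        exact real_pow_eq_one (Complex.normSq_nonneg α) (Nat.succ_ne_zero n) h3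
      rw [Complex.mul_conj, h2]
      norm_num
    have huroot : Polynomial.eval₂ φ α u = 0 := by
      rw [← Polynomial.eval_map]
      exact hα.eq_zero
    have hconjroot : Polynomial.eval₂ φ ((starRingEnd ℂ) α) u = 0 := by
      have hcomp : (starRingEnd ℂ).comp φ = φ := by
        ext x
        simp
      calc Polynomial.eval₂ φ ((starRingEnd ℂ) α) u
          = Polynomial.eval₂ ((starRingEnd ℂ).comp φ) ((starRingEnd ℂ) α) u := by rw [hcomp]
        _ = (starRingEnd ℂ) (Polynomial.eval₂ φ α u) := (Polynomial.hom_eval₂ _ _ _ _).symm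
        _ = 0 := by rw [huroot, map_zero]
    have : Invertible ((starRingEnd ℂ) α) := invertibleOfNonzero hconj0
    have hinv : ⅟((starRingEnd ℂ) α) = α :=
      invOf_eq_right_inv (by rw [mul_comm]; exact hnorm)
    have hvα : Polynomial.eval₂ φ α v = 0 := by
      rw [hvrefl]
      have := (Polynomial.eval₂_reflect_eq_zero_iff φ ((starRingEnd ℂ) α) D u
        (natDegree_toUni_le A)).mpr hconjroot
      rwa [hinv] at this
    have hroot_u : (Polynomial.X - Polynomial.C α) ∣ uC := Polynomial.dvd_iff_isRoot.mpr hα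
    have hroot_v : (Polynomial.X - Polynomial.C α) ∣ v.map φ := by
      refine Polynomial.dvd_iff_isRoot.mpr ?_
      show (v.map φ).eval α = 0
      rw [Polynomial.eval_map]
      exact hvα
    have hsq : Squarefree (P.map φ) := by
      have hdd : P.map φ ∣ (Polynomial.X ^ (n + 1) - Polynomial.C (1 : ℂ)) := by
        refine ⟨Polynomial.X - Polynomial.C 1, ?_⟩
        have hZ : P * (Polynomial.X - 1) = Polynomial.X ^ (n + 1) - 1 :=
          geom_sum_mul (Polynomial.X : Polynomial ℤ) (n + 1)
        have := congrArg (Polynomial.map φ) hZ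
        rw [Polynomial.map_mul, Polynomial.map_sub, Polynomial.map_sub, Polynomial.map_pow,
          Polynomial.map_X, Polynomial.map_one] at this
        rw [Polynomial.C_1]
        exact this.symm
      exact Squarefree.squarefree_of_dvd hdd
        (Polynomial.separable_X_pow_sub_C (1 : ℂ)
          (Nat.cast_ne_zero.mpr (Nat.succ_ne_zero n)) one_ne_zero).squarefree
    exact Polynomial.not_isUnit_X_sub_C α
      (hsq _ (dvd_trans (mul_dvd_mul hroot_u hroot_v) hPdvdC))
end

section
/- Every binary string whose length is one less than a prime is reconstructable: if |s| = p - 1 for a prime p, then any string equicomposable with s equals s or its reversal. -/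
open MvPolynomial

namespace SB

abbrev R2 := MvPolynomial (Fin 2) ℤ

def cf (s : List Bool) (i : ℕ) : ℕ := ((s.take i).count false)
def ct (s : List Bool) (i : ℕ) : ℕ := ((s.take i).count true)

lemma count_ft (l : List Bool) : l.count false + l.count true = l.length := by
  induction l with
  | nil => simp
  | cons a l ih => cases a <;> simp [List.count_cons] <;> omega

lemma cf_add_ct (s : List Bool) (i : ℕ) (h : i ≤ s.length) : cf s i + ct s i = i := by
  have := count_ft (s.take i)
  rwa [List.length_take, min_eq_left h] at this

lemma cf_le (s : List Bool) (i : ℕ) : cf s i ≤ s.count false :=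
  (s.take_sublist i).count_le false

lemma ct_le (s : List Bool) (i : ℕ) : ct s i ≤ s.count true :=
  (s.take_sublist i).count_le true

lemma cf_sub (s : List Bool) (i j : ℕ) :
    cf s (i + (j + 1)) = cf s i + ((s.drop i).take (j + 1)).count false := by
  unfold cf; rw [List.take_add, List.count_append]

lemma ct_sub (s : List Bool) (i j : ℕ) :
    ct s (i + (j + 1)) = ct s i + ((s.drop i).take (j + 1)).count true := by
  unfold ct; rw [List.take_add, List.count_append]

lemma cf_length (s : List Bool) : cf s s.length = s.count false := by
  unfold cf; rw [List.take_length]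

lemma ct_length (s : List Bool) : ct s s.length = s.count true := by
  unfold ct; rw [List.take_length]

noncomputable def mono (c d : ℕ) : R2 := X 0 ^ c * X 1 ^ d

lemma mono_mul (c d e f : ℕ) : mono c d * mono e f = mono (c + e) (d + f) := by
  unfold mono; ring

noncomputable def mu (c d : ℕ) : Fin 2 →₀ ℕ := Finsupp.single 0 c + Finsupp.single 1 d

lemma mono_eq_monomial (c d : ℕ) : mono c d = monomial (mu c d) 1 := by
  rw [mono, mu, X_pow_eq_monomial, X_pow_eq_monomial, monomial_mul, mul_one]

lemma mu_apply0 (c d : ℕ) : mu c d 0 = c := by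
  simp [mu, Finsupp.single_apply]

lemma mu_apply1 (c d : ℕ) : mu c d 1 = d := by
  simp [mu, Finsupp.single_apply]

lemma mu_inj {c d c' d' : ℕ} (h : mu c d = mu c' d') : c = c' ∧ d = d' := by
  constructor
  · have := congrArg (fun m => m 0) h; simpa [mu_apply0] using this
  · have := congrArg (fun m => m 1) h; simpa [mu_apply1] using this

lemma gen_eq (s : List Bool) :
    gen s = ∑ i ∈ Finset.range (s.length + 1), mono (cf s i) (ct s i) := by
  unfold gen
  refine Finset.sum_congr rfl fun i hi => ?_
  have hi' : i ≤ s.length := by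
    have := Finset.mem_range.mp hi; omega
  have h := cf_add_ct s i hi'
  unfold cf ct at h ⊢
  rw [show i - (s.take i).count false = (s.take i).count true from by omega]
  rfl

lemma cf_rev (s : List Bool) (i : ℕ) :
    cf s.reverse i = s.count false - cf s (s.length - i) := by
  unfold cf
  rw [List.take_reverse, List.count_reverse]
  have h2 : (s.take (s.length - i)).count false + (s.drop (s.length - i)).count false
      = s.count false := by
    rw [← List.count_append, List.take_append_drop]
  omega

lemma ct_rev (s : List Bool) (i : ℕ) :
    ct s.reverse i = s.count true - ct s (s.length - i) := by
  unfold ct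
  rw [List.take_reverse, List.count_reverse]
  have h2 : (s.take (s.length - i)).count true + (s.drop (s.length - i)).count true
      = s.count true := by
    rw [← List.count_append, List.take_append_drop]
  omega

lemma genRev (s : List Bool) :
    gen s.reverse = ∑ k ∈ Finset.range (s.length + 1),
      mono (s.count false - cf s k) (s.count true - ct s k) := by
  rw [gen_eq, List.length_reverse]
  calc ∑ i ∈ Finset.range (s.length + 1), mono (cf s.reverse i) (ct s.reverse i)
      = ∑ i ∈ Finset.range (s.length + 1),
        (fun k => mono (s.count false - cf s k) (s.count true - ct s k)) (s.length - i) := by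
        refine Finset.sum_congr rfl fun i hi => ?_
        simp only [cf_rev, ct_rev]
    _ = _ := by
        have := Finset.sum_range_reflect
          (fun k => mono (s.count false - cf s k) (s.count true - ct s k)) (s.length + 1)
        simpa using this

lemma list_range_sum {M : Type*} [AddCommMonoid M] (g : ℕ → M) (n : ℕ) :
    ((List.range n).map g).sum = ∑ i ∈ Finset.range n, g i := by
  induction n with
  | zero => simp
  | succ n ih => simp [List.range_succ, Finset.sum_range_succ, ih]

lemma flatMap_range_sum {M : Type*} [AddCommMonoid M] (F : ℕ → List M) (n : ℕ) :
    ((List.range n).flatMap F).sum = ∑ i ∈ Finset.range n, (F i).sum := by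
  induction n with
  | zero => simp
  | succ n ih => simp [List.range_succ, Finset.sum_range_succ, ih]

lemma compPoly_eq (s : List Bool) :
    compPoly s = ∑ i ∈ Finset.range s.length, ∑ j ∈ Finset.range (s.length - i),
      mono (((s.drop i).take (j + 1)).count false) (((s.drop i).take (j + 1)).count true) := by
  unfold compPoly
  rw [flatMap_range_sum]
  exact Finset.sum_congr rfl fun i _ => list_range_sum _ _

noncomputable def mirror (s : List Bool) : R2 :=
  ((subComps s).map fun m =>
    X 0 ^ (s.count false - m.count false) * X 1 ^ (s.count true - m.count true)).sum

lemma mirror_eq (s : List Bool) :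
    mirror s = ∑ i ∈ Finset.range s.length, ∑ j ∈ Finset.range (s.length - i),
      mono (s.count false - ((s.drop i).take (j + 1)).count false)
           (s.count true - ((s.drop i).take (j + 1)).count true) := by
  unfold mirror subComps
  rw [Multiset.map_coe, Multiset.sum_coe, List.map_flatMap]
  rw [flatMap_range_sum]
  refine Finset.sum_congr rfl fun i _ => ?_
  rw [List.map_map, list_range_sum]
  refine Finset.sum_congr rfl fun j _ => ?_
  simp [mono, Multiset.coe_count]

lemma compPoly_subComps (s : List Bool) :
    compPoly s = ((subComps s).map fun m =>
      X 0 ^ (m.count false) * X 1 ^ (m.count true)).sum := by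
  unfold compPoly subComps
  rw [Multiset.map_coe, Multiset.sum_coe, List.map_flatMap]
  congr 1
  apply List.flatMap_congr
  intro i _
  rw [List.map_map]
  refine List.map_congr_left fun j _ => ?_
  simp [Multiset.coe_count]

lemma tri {M : Type*} [AddCommMonoid M] (F : ℕ → ℕ → M) (n : ℕ) :
    ∑ i ∈ Finset.range (n+1), ∑ k ∈ Finset.range i, F i k
      = ∑ k ∈ Finset.range (n+1), ∑ i ∈ Finset.Ico (k+1) (n+1), F i k := by
  rw [Finset.sum_sigma', Finset.sum_sigma']
  refine Finset.sum_nbij' (fun p => ⟨p.2, p.1⟩) (fun p => ⟨p.2, p.1⟩) ?_ ?_ ?_ ?_ ?_ <;>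
    simp only [Finset.mem_sigma, Finset.mem_range, Finset.mem_Ico] <;> intros <;>
    first | omega | rfl | trivial

lemma part_diag (s : List Bool) :
    ∑ i ∈ Finset.range (s.length + 1),
      mono (cf s i) (ct s i) * mono (s.count false - cf s i) (s.count true - ct s i)
      = (s.length + 1) • mono (s.count false) (s.count true) := by
  have h : ∀ i ∈ Finset.range (s.length + 1),
      mono (cf s i) (ct s i) * mono (s.count false - cf s i) (s.count true - ct s i)
      = mono (s.count false) (s.count true) := by
    intro i hi
    rw [mono_mul]
    have h1 := cf_le s i
    have h2 := ct_le s i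
    congr 1 <;> omega
  rw [Finset.sum_congr rfl h, Finset.sum_const, Finset.card_range]

lemma part_upper (s : List Bool) :
    ∑ i ∈ Finset.range (s.length + 1), ∑ k ∈ Finset.Ico (i+1) (s.length + 1),
      mono (cf s i) (ct s i) * mono (s.count false - cf s k) (s.count true - ct s k)
      = mirror s := by
  rw [mirror_eq]
  rw [Finset.sum_range_succ]
  rw [show Finset.Ico (s.length + 1) (s.length + 1) = ∅ from Finset.Ico_self _, Finset.sum_empty,
    add_zero]
  refine Finset.sum_congr rfl fun i hi => ?_
  have hi' : i < s.length := Finset.mem_range.mp hi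
  rw [Finset.sum_Ico_eq_sum_range]
  rw [show s.length + 1 - (i + 1) = s.length - i from by omega]
  refine Finset.sum_congr rfl fun j hj => ?_
  have hj' : j < s.length - i := Finset.mem_range.mp hj
  rw [mono_mul]
  have h1 : cf s (i + (j + 1)) = cf s i + ((s.drop i).take (j+1)).count false := cf_sub s i j
  have h2 : ct s (i + (j + 1)) = ct s i + ((s.drop i).take (j+1)).count true := ct_sub s i j
  have h3 := cf_le s (i + (j + 1))
  have h4 := ct_le s (i + (j + 1))
  rw [show i + 1 + j = i + (j + 1) from by omega]
  congr 1 <;> omega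

lemma part_lower (s : List Bool) :
    ∑ i ∈ Finset.range (s.length + 1), ∑ k ∈ Finset.range i,
      mono (cf s i) (ct s i) * mono (s.count false - cf s k) (s.count true - ct s k)
      = mono (s.count false) (s.count true) * compPoly s := by
  rw [tri, compPoly_eq, Finset.mul_sum]
  rw [Finset.sum_range_succ]
  rw [show Finset.Ico (s.length + 1) (s.length + 1) = ∅ from Finset.Ico_self _, Finset.sum_empty,
    add_zero]
  refine Finset.sum_congr rfl fun k hk => ?_
  have hk' : k < s.length := Finset.mem_range.mp hk
  rw [Finset.mul_sum, Finset.sum_Ico_eq_sum_range]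
  rw [show s.length + 1 - (k + 1) = s.length - k from by omega]
  refine Finset.sum_congr rfl fun j hj => ?_
  have hj' : j < s.length - k := Finset.mem_range.mp hj
  rw [mono_mul, mono_mul]
  have h1 : cf s (k + (j + 1)) = cf s k + ((s.drop k).take (j+1)).count false := cf_sub s k j
  have h2 : ct s (k + (j + 1)) = ct s k + ((s.drop k).take (j+1)).count true := ct_sub s k j
  have h3 := cf_le s k
  have h4 := ct_le s k
  rw [show k + 1 + j = k + (j + 1) from by omega]
  congr 1 <;> omega

lemma key (s : List Bool) :
    gen s * gen s.reverse
      = (s.length + 1) • mono (s.count false) (s.count true)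
        + mono (s.count false) (s.count true) * compPoly s + mirror s := by
  rw [gen_eq, genRev, Finset.sum_mul_sum]
  have hsplit : ∀ i ∈ Finset.range (s.length + 1),
      ∑ k ∈ Finset.range (s.length + 1),
        mono (cf s i) (ct s i) * mono (s.count false - cf s k) (s.count true - ct s k)
      = (∑ k ∈ Finset.range i,
          mono (cf s i) (ct s i) * mono (s.count false - cf s k) (s.count true - ct s k))
        + ((mono (cf s i) (ct s i) * mono (s.count false - cf s i) (s.count true - ct s i))
        + ∑ k ∈ Finset.Ico (i+1) (s.length + 1),
          mono (cf s i) (ct s i) * mono (s.count false - cf s k) (s.count true - ct s k)) := by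
    intro i hi
    have hi' : i < s.length + 1 := Finset.mem_range.mp hi
    rw [Finset.range_eq_Ico,
      ← Finset.sum_Ico_consecutive _ (Nat.zero_le i) (by omega : i ≤ s.length + 1),
      Finset.sum_eq_sum_Ico_succ_bot (by omega : i < s.length + 1), ← Finset.range_eq_Ico]
  rw [Finset.sum_congr rfl hsplit, Finset.sum_add_distrib, Finset.sum_add_distrib,
    part_lower, part_diag, part_upper]
  abel


lemma tri_num (n : ℕ) : (∑ i ∈ Finset.range n, (n - i)) * 2 = n * (n + 1) := by
  induction n with
  | zero => simp
  | succ m ih =>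
    have h : ∑ i ∈ Finset.range (m+1), (m+1-i) = (∑ i ∈ Finset.range m, (m-i)) + (m+1) := by
      rw [Finset.sum_range_succ]
      have h2 : ∀ i ∈ Finset.range m, m+1-i = (m-i)+1 := fun i hi => by
        have := Finset.mem_range.mp hi; omega
      rw [Finset.sum_congr rfl h2, Finset.sum_add_distrib, Finset.sum_const, Finset.card_range,
        smul_eq_mul]
      omega
    rw [h, add_mul, ih]
    ring

lemma card_subComps (s : List Bool) :
    (Multiset.card (subComps s)) * 2 = s.length * (s.length + 1) := by
  unfold subComps
  rw [Multiset.coe_card, List.length_flatMap, list_range_sum]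
  have h : ∀ i ∈ Finset.range s.length,
      (List.length ∘ fun i => ((List.range (s.length - i)).map fun j =>
        (((s.drop i).take (j + 1) : List Bool) : Multiset Bool))) i = s.length - i := by
    intro i _
    simp [Function.comp]
  simp only [Function.comp_apply] at h
  rw [Finset.sum_congr rfl h]
  exact tri_num s.length

lemma length_eq_of_sc {s t : List Bool} (h : subComps s = subComps t) :
    s.length = t.length := by
  have hc := congrArg (fun m => Multiset.card m * 2) h
  simp only [card_subComps] at hc
  rcases Nat.lt_trichotomy s.length t.length with h1 | h1 | h1
  · nlinarith
  · exact h1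
  · nlinarith

lemma mem_subComps_self (s : List Bool) (hs : s ≠ []) : (↑s : Multiset Bool) ∈ subComps s := by
  have hn : 0 < s.length := List.length_pos_iff.mpr hs
  unfold subComps
  rw [Multiset.mem_coe]
  refine List.mem_flatMap.mpr ⟨0, List.mem_range.mpr hn, ?_⟩
  refine List.mem_map.mpr ⟨s.length - 1, List.mem_range.mpr (by omega), ?_⟩
  rw [List.drop_zero, show s.length - 1 + 1 = s.length from by omega, List.take_length]

lemma count_mem_le {s : List Bool} {m : Multiset Bool} (h : m ∈ subComps s) (c : Bool) :
    m.count c ≤ s.count c := by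
  unfold subComps at h
  rw [Multiset.mem_coe] at h
  obtain ⟨i, _, hm⟩ := List.mem_flatMap.mp h
  obtain ⟨j, _, rfl⟩ := List.mem_map.mp hm
  rw [Multiset.coe_count]
  exact (((s.drop i).take_sublist (j+1)).trans (s.drop_sublist i)).count_le c

lemma count_eq_of_sc {s t : List Bool} (h : subComps s = subComps t)
    (hs : s ≠ []) (ht : t ≠ []) (c : Bool) : s.count c = t.count c := by
  refine le_antisymm ?_ ?_
  · have h1 : (↑s : Multiset Bool) ∈ subComps t := h ▸ mem_subComps_self s hs
    have := count_mem_le h1 c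
    rwa [Multiset.coe_count] at this
  · have h1 : (↑t : Multiset Bool) ∈ subComps s := h.symm ▸ mem_subComps_self t ht
    have := count_mem_le h1 c
    rwa [Multiset.coe_count] at this

lemma gen_prod_eq {s t : List Bool} (h : subComps s = subComps t) (hs : s ≠ []) :
    gen t * gen t.reverse = gen s * gen s.reverse := by
  have hlen : t.length = s.length := (length_eq_of_sc h).symm
  have ht : t ≠ [] := by
    intro hte
    rw [hte] at hlen
    exact hs (List.length_eq_zero_iff.mp hlen.symm)
  have hcf : t.count false = s.count false := (count_eq_of_sc h hs ht false).symm
  have hct : t.count true = s.count true := (count_eq_of_sc h hs ht true).symm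
  have hcp : compPoly t = compPoly s := by
    rw [compPoly_subComps, compPoly_subComps, h]
  have hmir : mirror t = mirror s := by
    unfold mirror
    rw [h, hcf, hct]
  rw [key t, key s, hlen, hcf, hct, hcp, hmir]

noncomputable def Th : R2 →ₐ[ℤ] Polynomial R2 :=
  aeval (fun i => Polynomial.C (X i) * Polynomial.X)

lemma Th_mono (c d : ℕ) : Th (mono c d) = Polynomial.C (mono c d) * Polynomial.X ^ (c + d) := by
  unfold Th mono
  simp only [map_mul, map_pow, aeval_X, mul_pow, map_pow]
  rw [← Polynomial.C_pow, ← Polynomial.C_pow]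
  ring

lemma Th_gen (u : List Bool) :
    Th (gen u) = ∑ i ∈ Finset.range (u.length + 1),
      Polynomial.C (mono (cf u i) (ct u i)) * Polynomial.X ^ i := by
  rw [gen_eq, map_sum]
  refine Finset.sum_congr rfl fun i hi => ?_
  rw [Th_mono, cf_add_ct u i (by have := Finset.mem_range.mp hi; omega)]

lemma Th_gen_coeff (u : List Bool) (d : ℕ) :
    (Th (gen u)).coeff d = if d ≤ u.length then mono (cf u d) (ct u d) else 0 := by
  rw [Th_gen, Polynomial.finset_sum_coeff]
  have h : ∀ i ∈ Finset.range (u.length + 1),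
      (Polynomial.C (mono (cf u i) (ct u i)) * Polynomial.X ^ i).coeff d
      = if i = d then mono (cf u i) (ct u i) else 0 := by
    intro i _
    rw [Polynomial.coeff_C_mul, Polynomial.coeff_X_pow]
    rcases eq_or_ne i d with rfl | hne
    · simp
    · simp [hne, Ne.symm hne]
  rw [Finset.sum_congr rfl h, Finset.sum_ite_eq' (Finset.range (u.length + 1)) d]
  simp [Finset.mem_range, Nat.lt_succ_iff]

lemma mono_ne_zero (c d : ℕ) : mono c d ≠ 0 := by
  rw [mono_eq_monomial]
  simp [MvPolynomial.monomial_eq_zero]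

lemma Th_gen_natDegree (u : List Bool) : (Th (gen u)).natDegree = u.length := by
  refine le_antisymm ?_ ?_
  · refine Polynomial.natDegree_le_iff_coeff_eq_zero.mpr fun m hm => ?_
    rw [Th_gen_coeff, if_neg (by omega)]
  · refine Polynomial.le_natDegree_of_ne_zero ?_
    rw [Th_gen_coeff, if_pos le_rfl]
    exact mono_ne_zero _ _

lemma Th_gen_leadingCoeff (u : List Bool) :
    (Th (gen u)).leadingCoeff = mono (u.count false) (u.count true) := by
  rw [Polynomial.leadingCoeff, Th_gen_natDegree, Th_gen_coeff, if_pos le_rfl,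
    cf_length, ct_length]

lemma Th_gen_coeff_zero (u : List Bool) : (Th (gen u)).coeff 0 = 1 := by
  rw [Th_gen_coeff, if_pos (Nat.zero_le _)]
  simp [cf, ct, mono]

lemma Th_retract (P : R2) : Polynomial.eval (1 : R2) (Th P) = P := by
  have h : (Polynomial.evalRingHom (1 : R2)).comp (Th.toRingHom) = RingHom.id R2 :=
    MvPolynomial.ringHom_ext (fun r => by simp [Th]) (fun i => by simp [Th])
  exact RingHom.congr_fun h P

noncomputable def eps : R2 →+* ℤ := MvPolynomial.eval (fun _ : Fin 2 => (1 : ℤ))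

lemma toUni_eq (P : R2) : toUni P = (Th P).map eps := by
  have h : ((aeval (fun _ : Fin 2 => (Polynomial.X : Polynomial ℤ))).toRingHom : R2 →+* Polynomial ℤ)
      = (Polynomial.mapRingHom eps).comp (Th.toRingHom) :=
    MvPolynomial.ringHom_ext (fun r => by simp [Th, eps]) (fun i => by simp [Th, eps])
  exact RingHom.congr_fun h P

lemma eps_mono (c d : ℕ) : eps (mono c d) = 1 := by
  simp [eps, mono]

lemma toUni_gen (u : List Bool) :
    toUni (gen u) = ∑ i ∈ Finset.range (u.length + 1), Polynomial.X ^ i := by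
  rw [toUni_eq, Th_gen, Polynomial.map_sum]
  refine Finset.sum_congr rfl fun i _ => ?_
  rw [Polynomial.map_mul, Polynomial.map_pow, Polynomial.map_C, Polynomial.map_X, eps_mono,
    Polynomial.C_1, one_mul]

lemma Th_gen_ne_zero (u : List Bool) : Th (gen u) ≠ 0 := fun h => by
  have := Th_gen_coeff_zero u
  rw [h] at this
  simp at this

lemma isUnit_of_factor {u : List Bool} (A B : R2) (hAB : gen u = A * B)
    (hA : IsUnit (toUni A)) : IsUnit A := by
  have hTh : Th (gen u) = Th A * Th B := by rw [hAB, map_mul]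
  have hA0 : Th A ≠ 0 := by
    intro h0
    exact Th_gen_ne_zero u (by rw [hTh, h0, zero_mul])
  have hlc : (Th A).leadingCoeff * (Th B).leadingCoeff = mono (u.count false) (u.count true) := by
    rw [← Polynomial.leadingCoeff_mul, ← hTh, Th_gen_leadingCoeff]
  have heps : eps ((Th A).leadingCoeff) * eps ((Th B).leadingCoeff) = 1 := by
    rw [← map_mul, hlc, eps_mono]
  have hne : eps ((Th A).leadingCoeff) ≠ 0 := left_ne_zero_of_mul_eq_one heps
  have hdeg : (Th A).natDegree = 0 := by
    have h1 : ((Th A).map eps).natDegree = (Th A).natDegree :=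
      Polynomial.natDegree_map_of_leadingCoeff_ne_zero eps hne
    rw [← h1, ← toUni_eq]
    exact Polynomial.natDegree_eq_zero_of_isUnit hA
  have hC : Th A = Polynomial.C ((Th A).coeff 0) := Polynomial.eq_C_of_natDegree_eq_zero hdeg
  have h0 : (Th A).coeff 0 * (Th B).coeff 0 = 1 := by
    have := congrArg (fun q => Polynomial.coeff q 0) hTh
    simp only [Polynomial.mul_coeff_zero] at this
    rw [← this, Th_gen_coeff_zero]
  have hu : IsUnit ((Th A).coeff 0) := IsUnit.of_mul_eq_one _ h0
  have hAe : A = (Th A).coeff 0 := by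
    conv_lhs => rw [← Th_retract A, hC]
    rw [Polynomial.eval_C]
  rw [hAe]
  exact hu

lemma gen_irred {p : ℕ} (hp : p.Prime) (u : List Bool) (hu : u.length = p - 1) :
    Irreducible (gen u) := by
  haveI : Fact p.Prime := ⟨hp⟩
  have hn1 : u.length + 1 = p := by have := hp.two_le; omega
  have hcyc : toUni (gen u) = Polynomial.cyclotomic p ℤ := by
    rw [toUni_gen, Polynomial.cyclotomic_prime ℤ p, hn1]
  have hirr : Irreducible (toUni (gen u)) := by
    rw [hcyc]
    exact Polynomial.cyclotomic.irreducible hp.pos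
  constructor
  · intro hun
    exact hirr.not_isUnit (hun.map (aeval fun _ : Fin 2 => (Polynomial.X : Polynomial ℤ)))
  · intro A B hAB
    have h2 : toUni (gen u) = toUni A * toUni B := by
      rw [hAB]
      exact map_mul (aeval fun _ : Fin 2 => (Polynomial.X : Polynomial ℤ)) A B
    rcases hirr.isUnit_or_isUnit h2 with hA | hB
    · exact Or.inl (isUnit_of_factor A B hAB hA)
    · exact Or.inr (isUnit_of_factor B A (by rw [hAB, mul_comm]) hB)

lemma gen_assoc_eq {u v : List Bool} (h : Associated (gen u) (gen v)) : gen u = gen v := by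
  obtain ⟨w, hw⟩ := h
  have hunit : IsUnit (Th (w : R2)) := (Units.isUnit w).map Th
  have hdeg : (Th (w : R2)).natDegree = 0 := Polynomial.natDegree_eq_zero_of_isUnit hunit
  have hC : Th (w : R2) = Polynomial.C ((Th (w : R2)).coeff 0) :=
    Polynomial.eq_C_of_natDegree_eq_zero hdeg
  have h0 : (Th (w : R2)).coeff 0 = 1 := by
    have hTh : Th (gen u) * Th (w : R2) = Th (gen v) := by rw [← map_mul, hw]
    have := congrArg (fun q => Polynomial.coeff q 0) hTh
    simp only [Polynomial.mul_coeff_zero] at this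
    rw [Th_gen_coeff_zero, Th_gen_coeff_zero, one_mul] at this
    exact this
  have hw1 : (w : R2) = 1 := by
    have := Th_retract (w : R2)
    rw [hC, h0, Polynomial.C_1, Polynomial.eval_one] at this
    exact this.symm
  rw [← hw, hw1, mul_one]

lemma gen_coeff (u : List Bool) {i : ℕ} (hi : i ≤ u.length) {c d : ℕ} (hcd : c + d = i) :
    coeff (mu c d) (gen u) = if c = cf u i ∧ d = ct u i then 1 else 0 := by
  rw [gen_eq]
  have hform : ∀ j, mono (cf u j) (ct u j) = monomial (mu (cf u j) (ct u j)) 1 :=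
    fun j => mono_eq_monomial _ _
  simp only [hform]
  rw [MvPolynomial.coeff_sum]
  rw [Finset.sum_eq_single i]
  · rw [coeff_monomial]
    have hiff : mu (cf u i) (ct u i) = mu c d ↔ (c = cf u i ∧ d = ct u i) := by
      constructor
      · intro h
        obtain ⟨h1, h2⟩ := mu_inj h
        exact ⟨h1.symm, h2.symm⟩
      · rintro ⟨rfl, rfl⟩
        rfl
    exact if_congr hiff rfl rfl
  · intro j hj hji
    rw [coeff_monomial, if_neg]
    intro hmu
    obtain ⟨h1, h2⟩ := mu_inj hmu
    have hj' : j ≤ u.length := by have := Finset.mem_range.mp hj; omega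
    have := cf_add_ct u j hj'
    omega
  · intro hni
    exact absurd (Finset.mem_range.mpr (by omega)) hni

lemma cf_succ (u : List Bool) (i : ℕ) (h : i < u.length) :
    cf u (i + 1) = cf u i + (if u[i] = false then 1 else 0) := by
  unfold cf
  rw [List.take_succ, List.getElem?_eq_getElem h, List.count_append]
  cases hx : u[i] <;> simp

lemma gen_inj {u v : List Bool} (hlen : u.length = v.length) (hg : gen u = gen v) : u = v := by
  have hcf : ∀ i, i ≤ u.length → cf u i = cf v i := by
    intro i hi
    have h1 : coeff (mu (cf u i) (ct u i)) (gen u) = 1 := by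
      rw [gen_coeff u hi (cf_add_ct u i hi)]
      simp
    rw [hg, gen_coeff v (hlen ▸ hi) (cf_add_ct u i hi)] at h1
    split_ifs at h1 with hc
    · exact hc.1
    · simp at h1
  refine List.ext_getElem hlen fun i h1 h2 => ?_
  have e1 := cf_succ u i h1
  have e2 := cf_succ v i h2
  have e3 := hcf i (by omega)
  have e4 := hcf (i + 1) (by omega)
  cases hx : u[i] <;> cases hy : v[i] <;> rw [hx] at e1 <;> rw [hy] at e2 <;>
    simp at e1 e2 <;> omega

end SB

theorem stmt15 (p : ℕ) (hp : p.Prime) (s : List Bool) (hl : s.length = p - 1)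
    (t : List Bool) (h : Equicomposable s t) : t = s ∨ t = s.reverse := by
  have hsc : subComps s = subComps t := h
  have hp2 := hp.two_le
  have hs : s ≠ [] := by
    intro he
    rw [he] at hl
    simp at hl
    omega
  have hlen : t.length = s.length := (SB.length_eq_of_sc hsc).symm
  have hprod : gen t * gen t.reverse = gen s * gen s.reverse := SB.gen_prod_eq hsc hs
  have hirr_s : Irreducible (gen s) := SB.gen_irred hp s hl
  have hirr_sr : Irreducible (gen s.reverse) := SB.gen_irred hp s.reverse (by simpa using hl)
  have hirr_t : Irreducible (gen t) := SB.gen_irred hp t (hlen.trans hl)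
  have hprime_t : Prime (gen t) := (UniqueFactorizationMonoid.irreducible_iff_prime).mp hirr_t
  have hdvd : gen t ∣ gen s * gen s.reverse := by
    rw [← hprod]
    exact dvd_mul_right _ _
  rcases hprime_t.2.2 _ _ hdvd with hd | hd
  · left
    have hassoc : Associated (gen t) (gen s) := hirr_t.associated_of_dvd hirr_s hd
    exact SB.gen_inj (hlen.trans rfl) (SB.gen_assoc_eq hassoc)
  · right
    have hassoc : Associated (gen t) (gen s.reverse) := hirr_t.associated_of_dvd hirr_sr hd
    exact SB.gen_inj (by simpa using hlen) (SB.gen_assoc_eq hassoc)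
end

section
/- For any binary string s with a zeros and b ones and any binary string t, the generating polynomial of the interleaving satisfies P_{s∘t}(x,y) = P_s(x,y) · P_t(x^{a+1} y^b, x^a y^{b+1}). -/
open MvPolynomial

lemma count_fb (w : List Bool) : w.count false + w.count true = w.length := by
  induction w with
  | nil => simp
  | cons b w ih =>
    cases b <;> simp only [List.count_cons, List.length_cons, if_pos, if_neg] <;> simp <;> omega

lemma gen_nil : gen [] = 1 := by simp [gen]

lemma gen_snoc (w : List Bool) (b : Bool) :
    gen (w ++ [b]) = gen w + X 0 ^ ((w ++ [b]).count false) * X 1 ^ ((w ++ [b]).count true) := by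
  have hl : (w ++ [b]).length = w.length + 1 := by simp
  rw [gen, hl, Finset.sum_range_succ]
  congr 1
  · rw [gen]
    refine Finset.sum_congr rfl fun i hi => ?_
    have : i ≤ w.length := by simpa using Nat.lt_succ_iff.mp (Finset.mem_range.mp hi)
    rw [List.take_append_of_le_length this]
  · have ht : (w ++ [b]).take (w.length + 1) = w ++ [b] := by
      apply List.take_of_length_le; simp
    rw [ht]
    congr 1
    have h2 := count_fb (w ++ [b])
    have h3 : (w ++ [b]).length = w.length + 1 := by simp
    rw [h3] at h2
    congr 1
    omega

lemma gen_append (u v : List Bool) :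
    gen (u ++ v) = gen u + (X 0 ^ u.count false * X 1 ^ u.count true) * (gen v - 1) := by
  induction v using List.reverseRecOn with
  | nil => simp [gen_nil]
  | append_singleton v b ih =>
    rw [← List.append_assoc, gen_snoc, ih, gen_snoc]
    simp only [List.count_append, pow_add]
    ring

lemma gen_cons (b : Bool) (t : List Bool) :
    gen (b :: t) = 1 + (cond b (X 1) (X 0)) * gen t := by
  have h : (b :: t) = [b] ++ t := rfl
  rw [h, gen_append]
  cases b <;> simp [gen, Finset.sum_range_succ] <;> ring

theorem stmt18 (s t : List Bool) :
    gen (interleave s t)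
      = gen s * MvPolynomial.aeval
          (fun i : Fin 2 =>
            if i = 0 then X 0 ^ (s.count false + 1) * X 1 ^ (s.count true)
            else X 0 ^ (s.count false) * X 1 ^ (s.count true + 1))
          (gen t) := by
  induction t with
  | nil => simp [interleave, gen_nil]
  | cons b t ih =>
    have h1 : interleave s (b :: t) = (s ++ [b]) ++ interleave s t := by
      simp [interleave]
    rw [h1, gen_append, gen_snoc, ih, gen_cons, map_add, map_one, map_mul]
    cases b <;>
      simp [List.count_cons, List.count_append, pow_succ] <;>
      ring
end
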